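/- arXiv:2007.13198 — 4 statements merged into one kernel-verified Lean document; each statement's English description precedes it below -/
import Mathlib

section
/- Let (L, ⊔, ⊓) be a lattice equipped with a binary operation * satisfying, for all x, y, z ∈ L, the identities z ⊔ y ≤ x * ((x ⊔ y) ⊓ (z ⊔ y)) and (x ⊔ y) ⊓ (x * y) = y. Then for all a, b ∈ L, a*b is the greatest element c of L satisfying (a ⊔ b) ⊓ c = b, i.e. L is sectionally pseudocomplemented with sectional pseudocomplementation *. -/
/-- A binary operation `star` makes the lattice `L` sectionally pseudocomplemented if
for all `a b`, `star a b` is the greatest element `c` with `(a ⊔ b) ⊓ c = b`. -/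
def IsSPLattice {L : Type*} [Lattice L] (star : L → L → L) : Prop :=
  ∀ a b : L, (a ⊔ b) ⊓ star a b = b ∧ ∀ c : L, (a ⊔ b) ⊓ c = b → c ≤ star a b

theorem stmt_1 {L : Type*} [Lattice L] (star : L → L → L)
    (h1 : ∀ x y z : L, z ⊔ y ≤ star x ((x ⊔ y) ⊓ (z ⊔ y)))
    (h2 : ∀ x y : L, (x ⊔ y) ⊓ star x y = y) :
    IsSPLattice star := by
  intro a b
  refine ⟨h2 a b, fun c hc => ?_⟩
  have hcb : c ⊔ b = c := sup_eq_left.mpr (hc ▸ inf_le_right)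
  calc c = c ⊔ b := hcb.symm
    _ ≤ star a ((a ⊔ b) ⊓ (c ⊔ b)) := h1 a b c
    _ = star a b := by rw [hcb, hc]
end

section
/- In a sectionally pseudocomplemented lattice (L, ⊔, ⊓, *), the term p(x, y, z) := ((x*y)*z) ⊓ ((z*y)*x) is a Maltsev term, i.e. p(x, x, z) = z and p(x, z, z) = x hold for all x, z ∈ L. -/
/-! Every `star a a` is a greatest element of `L`, and `a ⊔ b ≤ star (star a b) b`. In
`p x x z` the second meetand lies above `z` and below `star x x`, so meeting it with
`star (star x x) z` cuts it down to `z`; `p x z z = x` is the mirror image. -/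

namespace IsSPLattice

variable {L : Type*} [Lattice L] {star : L → L → L}

theorem le_star (h : IsSPLattice star) (a b : L) : b ≤ star a b :=
  (h a b).2 b (inf_eq_right.2 le_sup_right)

theorem le_star_self (h : IsSPLattice star) (a c : L) : c ≤ star a a := by
  have hca : a ⊓ (c ⊔ a) = a := inf_eq_left.2 le_sup_right
  exact le_sup_left.trans ((h a a).2 (c ⊔ a) (by rwa [sup_idem]))

theorem sup_le_star_star (h : IsSPLattice star) (a b : L) : a ⊔ b ≤ star (star a b) b := by
  refine (h (star a b) b).2 _ ?_
  rw [sup_eq_left.2 (h.le_star a b), inf_comm]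
  exact (h a b).1

theorem inf_star_le (h : IsSPLattice star) {a b c : L} (hc : c ≤ a ⊔ b) :
    c ⊓ star a b ≤ b :=
  (inf_le_inf_right _ hc).trans_eq (h a b).1

theorem star_inf_le (h : IsSPLattice star) {a b c : L} (hc : c ≤ a ⊔ b) :
    star a b ⊓ c ≤ b :=
  inf_comm (star a b) c ▸ h.inf_star_le hc

end IsSPLattice

theorem stmt_2 {L : Type*} [Lattice L] (star : L → L → L) (h : IsSPLattice star)
    (p : L → L → L → L)
    (hp : ∀ x y z : L, p x y z = star (star x y) z ⊓ star (star z y) x) :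
    ∀ x z : L, p x x z = z ∧ p x z z = x := by
  intro x z
  rw [hp, hp]
  constructor
  · refine le_antisymm (h.star_inf_le (le_sup_of_le_left (h.le_star_self x _))) ?_
    exact le_inf (h.le_star _ z) (le_sup_left.trans (h.sup_le_star_star z x))
  · refine le_antisymm (h.inf_star_le (le_sup_of_le_left (h.le_star_self z _))) ?_
    exact le_inf (le_sup_left.trans (h.sup_le_star_star x z)) (h.le_star _ x)
end

section
/- Let (L, ⊔, ⊓, *) be a nonempty sectionally pseudocomplemented lattice with greatest element 1 and let Θ be a congruence on L. Then the congruence class [1]Θ is a filter of L, and for all x, y ∈ L, (x, y) ∈ Θ if and only if x*y ∈ [1]Θ and y*x ∈ [1]Θ; i.e. Φ([1]Θ) = Θ. -/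
/-- A congruence on a sectionally pseudocomplemented lattice: an equivalence relation
compatible with `⊔`, `⊓` and `star`. -/
def IsSPCong {L : Type*} [Lattice L] (star : L → L → L) (Θ : L → L → Prop) : Prop :=
  Equivalence Θ ∧ ∀ a b c d : L, Θ a b → Θ c d →
    Θ (a ⊔ c) (b ⊔ d) ∧ Θ (a ⊓ c) (b ⊓ d) ∧ Θ (star a c) (star b d)

/-- A filter of a sectionally pseudocomplemented lattice with greatest element `one`. -/
def IsSPFilter {L : Type*} [Lattice L] (star : L → L → L) (one : L) (F : Set L) : Prop :=
  one ∈ F ∧ ∀ x y z : L, star x y ∈ F → star y x ∈ F →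
    star (x ⊔ z) (y ⊔ z) ∈ F ∧ star (x ⊓ z) (y ⊓ z) ∈ F ∧
    star (star x z) (star y z) ∈ F ∧ star (star z x) (star z y) ∈ F

/-- `Φ(M)`: the relation consisting of all pairs `(x, y)` with `star x y ∈ M` and `star y x ∈ M`. -/
def PhiRel {L : Type*} (star : L → L → L) (M : Set L) : L → L → Prop :=
  fun x y => star x y ∈ M ∧ star y x ∈ M

/-- The congruence class of `one` under `Θ`. -/
def oneClass {L : Type*} (Θ : L → L → Prop) (one : L) : Set L := {x : L | Θ x one}

section

variable {L : Type*} [Lattice L] {star : L → L → L} {one : L}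

theorem IsSPLattice.star_self (h : IsSPLattice star) (hone : ∀ x : L, x ≤ one) (a : L) :
    star a a = one :=
  (hone _).antisymm <| (h a a).2 one (by rw [sup_idem, inf_eq_left.mpr (hone a)])

variable {Θ : L → L → Prop}

theorem IsSPCong.star_mem_oneClass (hΘ : IsSPCong star Θ) (h : IsSPLattice star)
    (hone : ∀ x : L, x ≤ one) {x y : L} (hxy : Θ x y) : star x y ∈ oneClass Θ one := by
  have hstar : Θ (star x y) (star y y) := (hΘ.2 x y y y hxy (hΘ.1.refl y)).2.2
  rwa [h.star_self hone y] at hstar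

theorem IsSPCong.rel_sup_of_star_mem_oneClass (hΘ : IsSPCong star Θ) (h : IsSPLattice star)
    (hone : ∀ x : L, x ≤ one) {x y : L} (hxy : star x y ∈ oneClass Θ one) : Θ y (x ⊔ y) := by
  have hmeet : Θ ((x ⊔ y) ⊓ star x y) ((x ⊔ y) ⊓ one) :=
    (hΘ.2 (x ⊔ y) (x ⊔ y) (star x y) one (hΘ.1.refl _) hxy).2.1
  rwa [(h x y).1, inf_eq_left.mpr (hone _)] at hmeet

theorem IsSPCong.rel_iff_phiRel_oneClass (hΘ : IsSPCong star Θ) (h : IsSPLattice star)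
    (hone : ∀ x : L, x ≤ one) (x y : L) : Θ x y ↔ PhiRel star (oneClass Θ one) x y := by
  refine ⟨fun hxy => ⟨hΘ.star_mem_oneClass h hone hxy,
    hΘ.star_mem_oneClass h hone (hΘ.1.symm hxy)⟩, fun ⟨hxy, hyx⟩ => ?_⟩
  have hy := hΘ.rel_sup_of_star_mem_oneClass h hone hxy
  have hx := hΘ.rel_sup_of_star_mem_oneClass h hone hyx
  rw [sup_comm] at hx
  exact hΘ.1.trans hx (hΘ.1.symm hy)

theorem IsSPCong.isSPFilter_oneClass (hΘ : IsSPCong star Θ) (h : IsSPLattice star)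
    (hone : ∀ x : L, x ≤ one) : IsSPFilter star one (oneClass Θ one) := by
  refine ⟨hΘ.1.refl one, fun x y z hxy hyx => ?_⟩
  have hrel : Θ x y := (hΘ.rel_iff_phiRel_oneClass h hone x y).2 ⟨hxy, hyx⟩
  have hz := hΘ.1.refl z
  obtain ⟨hsup, hinf, hstar⟩ := hΘ.2 x y z z hrel hz
  exact ⟨hΘ.star_mem_oneClass h hone hsup, hΘ.star_mem_oneClass h hone hinf,
    hΘ.star_mem_oneClass h hone hstar, hΘ.star_mem_oneClass h hone (hΘ.2 z z x y hz hrel).2.2⟩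

end

theorem stmt_6 {L : Type*} [Lattice L] (star : L → L → L) (h : IsSPLattice star)
    (one : L) (hone : ∀ x : L, x ≤ one)
    (Θ : L → L → Prop) (hΘ : IsSPCong star Θ) :
    IsSPFilter star one (oneClass Θ one) ∧
    ∀ x y : L, Θ x y ↔ (star x y ∈ oneClass Θ one ∧ star y x ∈ oneClass Θ one) :=
  ⟨hΘ.isSPFilter_oneClass h hone, hΘ.rel_iff_phiRel_oneClass h hone⟩
end

section
/- Let (L, ⊔, ⊓, *) be a nonempty sectionally pseudocomplemented lattice with greatest element 1 and F ⊆ L. Then F is a filter of L if and only if F is closed with respect to the ideal terms t₁, …, t₅, i.e.: 1 ∈ F, and for all x₁, x₂, x₃ ∈ L and all y₁, y₂ ∈ F the following elements lie in F: t₂ = (((x₁ ⊔ x₂) ⊓ (y₁*x₂) ⊓ y₂) ⊔ x₃)*(x₂ ⊔ x₃), t₃ = (((x₁ ⊔ x₂) ⊓ (y₁*x₂) ⊓ y₂) ⊓ x₃)*(x₂ ⊓ x₃), t₄ = (((x₁ ⊔ x₂) ⊓ (y₁*x₂) ⊓ y₂)*x₃)*(x₂*x₃), and t₅ = (x₃*x₁)*(x₃*((x₁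 ⊔ x₂) ⊓ (y₂*x₁) ⊓ y₁)). -/
namespace IsSPLattice

variable {L : Type*} [Lattice L] {star : L → L → L}

theorem star_eq_of_le (h : IsSPLattice star) {one : L} (hone : ∀ x : L, x ≤ one) {a b : L}
    (hab : a ≤ b) : star a b = one := by
  refine le_antisymm (hone _) ((h a b).2 one ?_)
  rw [sup_eq_right.2 hab, inf_eq_left.2 (hone b)]

theorem one_star (h : IsSPLattice star) {one : L} (hone : ∀ x : L, x ≤ one) (b : L) :
    star one b = b := by
  simpa only [sup_eq_left.2 (hone b), inf_eq_right.2 (hone _)] using (h one b).1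

theorem star_le_star_left (h : IsSPLattice star) {a b c : L} (hba : b ⊔ c ≤ a ⊔ c) :
    star a c ≤ star b c := by
  refine (h b c).2 _ (le_antisymm ?_ (le_inf le_sup_right (h.le_star a c)))
  calc (b ⊔ c) ⊓ star a c ≤ (a ⊔ c) ⊓ star a c := inf_le_inf_right _ hba
    _ = c := (h a c).1

theorem sup_inf_star_star_inf_star (h : IsSPLattice star) (a b : L) :
    (a ⊔ b) ⊓ star (star a b) b ⊓ star b a = a := by
  apply le_antisymm
  · calc (a ⊔ b) ⊓ star (star a b) b ⊓ star b a ≤ (b ⊔ a) ⊓ star b a := by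
          rw [sup_comm]; exact inf_le_inf_right _ inf_le_left
      _ = a := (h b a).1
  · refine le_inf (le_inf le_sup_left ?_) (h.le_star b a)
    refine le_sup_left.trans ((h (star a b) b).2 (a ⊔ b) ?_)
    rw [sup_eq_left.2 (h.le_star a b), inf_comm]
    exact (h a b).1

end IsSPLattice

namespace IsSPFilter

variable {L : Type*} [Lattice L] {star : L → L → L} {one : L} {F : Set L}

theorem phiRel_one (h : IsSPLattice star) (hone : ∀ x : L, x ≤ one) (hF : IsSPFilter star one F)
    {y : L} (hy : y ∈ F) : PhiRel star F y one :=
  ⟨by rw [h.star_eq_of_le hone (hone y)]; exact hF.1, by rwa [h.one_star hone]⟩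

theorem mem_of_le (h : IsSPLattice star) (hone : ∀ x : L, x ≤ one) (hF : IsSPFilter star one F)
    {a b : L} (ha : a ∈ F) (hab : a ≤ b) : b ∈ F := by
  obtain ⟨h₁, h₂⟩ := hF.phiRel_one h hone ha
  simpa only [sup_eq_right.2 hab, sup_eq_left.2 (hone b), h.one_star hone]
    using (hF.2 one a b h₂ h₁).1

theorem star_star_mem (h : IsSPLattice star) (hone : ∀ x : L, x ≤ one)
    (hF : IsSPFilter star one F) {y : L} (hy : y ∈ F) (v : L) : star (star y v) v ∈ F := by
  obtain ⟨h₁, h₂⟩ := hF.phiRel_one h hone hy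
  simpa only [h.one_star hone] using (hF.2 y one v h₁ h₂).2.2.1

theorem phiRel_sup_inf_star_inf (h : IsSPLattice star) (hone : ∀ x : L, x ≤ one)
    (hF : IsSPFilter star one F) (u v : L) {y y' : L} (hy : y ∈ F) (hy' : y' ∈ F) :
    PhiRel star F ((u ⊔ v) ⊓ star y v ⊓ y') v := by
  have hvA : v ≤ (u ⊔ v) ⊓ star y v := le_inf le_sup_right (h.le_star y v)
  have hAv : star ((u ⊔ v) ⊓ star y v) v ∈ F := by
    have h₁ := hF.star_star_mem h hone hy v
    have h₂ : star v (star y v) ∈ F := by rw [h.star_eq_of_le hone (h.le_star y v)]; exact hF.1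
    simpa only [inf_comm (star y v), inf_eq_left.2 (le_sup_right : v ≤ u ⊔ v)]
      using (hF.2 _ v (u ⊔ v) h₁ h₂).2.1
  refine ⟨hF.mem_of_le h hone hAv (h.star_le_star_left ?_), hF.mem_of_le h hone hy' ?_⟩
  · rw [sup_eq_left.2 hvA]
    exact sup_le inf_le_left hvA
  · refine (h v _).2 y' (le_antisymm ?_ (le_inf le_sup_right inf_le_right))
    exact le_inf (inf_le_left.trans (sup_le hvA inf_le_left)) inf_le_right

end IsSPFilter

theorem stmt_12 {L : Type*} [Lattice L] (star : L → L → L) (h : IsSPLattice star)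
    (one : L) (hone : ∀ x : L, x ≤ one) (F : Set L) :
    IsSPFilter star one F ↔
      (one ∈ F ∧
       ∀ x₁ x₂ x₃ : L, ∀ y₁ ∈ F, ∀ y₂ ∈ F,
         star ((x₁ ⊔ x₂) ⊓ star y₁ x₂ ⊓ y₂ ⊔ x₃) (x₂ ⊔ x₃) ∈ F ∧
         star ((x₁ ⊔ x₂) ⊓ star y₁ x₂ ⊓ y₂ ⊓ x₃) (x₂ ⊓ x₃) ∈ F ∧
         star (star ((x₁ ⊔ x₂) ⊓ star y₁ x₂ ⊓ y₂) x₃) (star x₂ x₃) ∈ F ∧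
         star (star x₃ x₁) (star x₃ ((x₁ ⊔ x₂) ⊓ star y₂ x₁ ⊓ y₁)) ∈ F) := by
  constructor
  · intro hF
    refine ⟨hF.1, fun x₁ x₂ x₃ y₁ hy₁ y₂ hy₂ => ?_⟩
    obtain ⟨he₁, he₂⟩ := hF.phiRel_sup_inf_star_inf h hone x₁ x₂ hy₁ hy₂
    obtain ⟨he₃, he₄⟩ := hF.phiRel_sup_inf_star_inf h hone x₂ x₁ hy₂ hy₁
    rw [sup_comm x₂ x₁] at he₃ he₄
    obtain ⟨ht₂, ht₃, ht₄, -⟩ := hF.2 _ x₂ x₃ he₁ he₂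
    exact ⟨ht₂, ht₃, ht₄, (hF.2 x₁ _ x₃ he₄ he₃).2.2.2⟩
  · rintro ⟨h₁, ht⟩
    refine ⟨h₁, fun x y z hxy hyx => ?_⟩
    have H := ht x y z (star x y) hxy (star y x) hyx
    rwa [h.sup_inf_star_star_inf_star, sup_comm x y, h.sup_inf_star_star_inf_star] at H
end
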